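/- Let Γ = (V,E) be a finite graph (loops allowed) with n vertices, and let d be the number of connected components of Γ that do not contain a loop. Let Fix(Γ) denote the set of animations α of Γ such that every α-periodic point is a fixed point of α, and let Fix_k(Γ) be those of degree k. Then Fix_{n−d}(Γ) ≠ ∅ and Fix_{n−d+1}(Γ) = ∅; in other words, the maximal degree of an animation in Fix(Γ) is n − d. -/

import Mathlib

/-!
An animation whose periodic points are fixed can only be periodic at a loop. Inside a loopless
component `C` it therefore cannot be defined everywhere: otherwise the forward orbit of a point of
`C` would stay in the finite set `C` and become periodic. So every such animation is undefined at
`d` points or more. Conversely, choose a root in each component, a looped vertex if there is one,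
and send every other vertex to a neighbour one step closer to its root (breadth-first layers);
roots with a loop are fixed and the other roots are left undefined. Along this animation the
distance to the root strictly decreases until it reaches `0`, so the only periodic points are the
looped roots, and the animation is undefined exactly at the `d` loopless roots.
-/

/-- One step of a partial function `φ : U ⇀ U`, as a total map on `Option U` sending `⊥ = none`
to itself. -/
def pstep {U : Type*} (φ : U → Option U) : Option U → Option U := fun o => o.bind φ

/-- The `n`-fold iterate `φ^n` of a partial function `φ : U ⇀ U`. -/
def piter {U : Type*} (φ : U → Option U) (n : ℕ) : Option U → Option U := (pstep φ)^[n]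

/-- The preorder `⪯_φ`: `v ⪯_φ w` iff `φ^n(v) = w` for some `n ≥ 0`. -/
def ple {U : Type*} (φ : U → Option U) (v w : U) : Prop :=
  ∃ n : ℕ, piter φ n (some v) = some w

/-- `u` is `φ`-periodic iff `φ^n(u) = u` for some `n ≥ 1`. -/
def pperiodic {U : Type*} (φ : U → Option U) (u : U) : Prop :=
  ∃ n : ℕ, 0 < n ∧ piter φ n (some u) = some u

section PartialIteration

variable {U : Type*} {φ : U → Option U}

lemma piter_none (n : ℕ) : piter φ n none = none := by
  induction n with
  | zero => rfl
  | succ n ih => exact (Function.iterate_succ_apply _ _ _).trans ih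

lemma piter_succ_some (n : ℕ) (u : U) : piter φ (n + 1) (some u) = piter φ n (φ u) :=
  Function.iterate_succ_apply _ _ _

lemma piter_succ' (n : ℕ) (o : Option U) : piter φ (n + 1) o = (piter φ n o).bind φ :=
  Function.iterate_succ_apply' _ _ _

lemma piter_add (m n : ℕ) (o : Option U) : piter φ (m + n) o = piter φ m (piter φ n o) :=
  Function.iterate_add_apply _ _ _ _

lemma pperiodic.isSome {u : U} (hu : pperiodic φ u) : (φ u).isSome := by
  obtain ⟨n, hn, hper⟩ := hu
  obtain ⟨k, rfl⟩ := Nat.exists_eq_add_of_lt hn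
  rw [zero_add, piter_succ_some] at hper
  cases h : φ u with
  | none => rw [h, piter_none] at hper; cases hper
  | some _ => rfl

lemma le_of_piter_eq_some {μ : U → ℕ} (hμ : ∀ v w, φ v = some w → μ w ≤ μ v) :
    ∀ n v w, piter φ n (some v) = some w → μ w ≤ μ v := by
  intro n
  induction n with
  | zero =>
    rintro v w ⟨⟩
    rfl
  | succ n ih =>
    intro v w hvw
    rw [piter_succ_some] at hvw
    cases h : φ v with
    | none => rw [h, piter_none] at hvw; cases hvw
    | some u => rw [h] at hvw; exact (ih u w hvw).trans (hμ v u h)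

lemma pperiodic.eq_zero {μ : U → ℕ} (hle : ∀ v w, φ v = some w → μ w ≤ μ v)
    (hlt : ∀ v w, φ v = some w → μ v ≠ 0 → μ w < μ v) {u : U} (hu : pperiodic φ u) :
    μ u = 0 := by
  obtain ⟨w, hw⟩ := Option.isSome_iff_exists.mp hu.isSome
  obtain ⟨n, hn, hper⟩ := hu
  obtain ⟨k, rfl⟩ := Nat.exists_eq_add_of_lt hn
  rw [zero_add, piter_succ_some, hw] at hper
  have := le_of_piter_eq_some hle k w u hper
  by_contra h0
  exact absurd (hlt u w hw h0) (not_lt.mpr this)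

lemma exists_pperiodic_of_forall_mem [Finite U] {S : Set U}
    (hS : ∀ v ∈ S, ∃ w ∈ S, φ v = some w) {v₀ : U} (hv₀ : v₀ ∈ S) :
    ∃ u ∈ S, pperiodic φ u := by
  have horbit : ∀ n, ∃ w ∈ S, piter φ n (some v₀) = some w := by
    intro n
    induction n with
    | zero => exact ⟨v₀, hv₀, rfl⟩
    | succ n ih =>
      obtain ⟨w, hwS, hw⟩ := ih
      obtain ⟨w', hw'S, hw'⟩ := hS w hwS
      exact ⟨w', hw'S, by rw [piter_succ', hw, Option.bind_some, hw']⟩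
  obtain ⟨i, j, hij, heq⟩ := Finite.exists_ne_map_eq_of_infinite fun n => piter φ n (some v₀)
  wlog hlt : i < j generalizing i j
  · exact this j i hij.symm heq.symm (by omega)
  obtain ⟨u, huS, hu⟩ := horbit i
  refine ⟨u, huS, j - i, by omega, ?_⟩
  rw [← hu, ← piter_add, Nat.sub_add_cancel hlt.le, heq]

end PartialIteration

section Descent

variable {X : Type*}

def reachWithin (r : X → X → Prop) (S : Set X) : ℕ → Set X
  | 0 => S
  | n + 1 => reachWithin r S n ∪ {a | ∃ b ∈ reachWithin r S n, r a b}

lemma exists_mem_reachWithin {r : X → X → Prop} {S : Set X} {a b : X}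
    (hab : Relation.ReflTransGen r a b) (hb : b ∈ S) : ∃ n, a ∈ reachWithin r S n := by
  induction hab using Relation.ReflTransGen.head_induction_on with
  | refl => exact ⟨0, hb⟩
  | head hac _ ih =>
    obtain ⟨n, hn⟩ := ih
    exact ⟨n + 1, Or.inr ⟨_, hn, hac⟩⟩

lemma exists_rank_of_reflTransGen {r : X → X → Prop} {S : Set X}
    (h : ∀ a, ∃ b ∈ S, Relation.ReflTransGen r a b) :
    ∃ μ : X → ℕ, (∀ a, μ a = 0 ↔ a ∈ S) ∧ ∀ a, μ a ≠ 0 → ∃ b, r a b ∧ μ b < μ a := by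
  classical
  have hex : ∀ a, ∃ n, a ∈ reachWithin r S n := fun a =>
    let ⟨_, hb, hab⟩ := h a
    exists_mem_reachWithin hab hb
  refine ⟨fun a => Nat.find (hex a), fun a => Nat.find_eq_zero _, fun a ha => ?_⟩
  obtain ⟨k, hk⟩ : ∃ k, Nat.find (hex a) = k + 1 := Nat.exists_eq_succ_of_ne_zero ha
  have hmem : a ∈ reachWithin r S (k + 1) := hk ▸ Nat.find_spec (hex a)
  have hnot : a ∉ reachWithin r S k := Nat.find_min (hex a) (by omega)
  obtain ⟨b, hb, hab⟩ := hmem.resolve_left hnot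
  exact ⟨b, hab, (Nat.find_le hb).trans_lt (show k < Nat.find (hex a) by omega)⟩

end Descent

section Animations

variable {V : Type*} {Adj : V → V → Prop}

def IsAnimation (Adj : V → V → Prop) (α : V → Option V) : Prop :=
  ∀ a b, α a = some b → Adj a b

def PeriodicPointsFixed (α : V → Option V) : Prop :=
  ∀ u, pperiodic α u → α u = some u

def HasLoop (Adj : V → V → Prop) (c : Quot Adj) : Prop :=
  ∃ w, Adj w w ∧ Quot.mk Adj w = c

lemma card_isSome_add_card_eq_none [Finite V] (α : V → Option V) :
    Nat.card {v // (α v).isSome} + Nat.card {v // α v = none} = Nat.card V := by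
  rw [← Nat.card_sum]
  refine Nat.card_congr ((Equiv.sumCongr (Equiv.refl _) (Equiv.subtypeEquivRight ?_)).trans
    (Equiv.sumCompl _))
  simp

lemma exists_eq_none_of_not_hasLoop [Finite V] {α : V → Option V} (hα : IsAnimation Adj α)
    (hfix : PeriodicPointsFixed α) {c : Quot Adj} (hc : ¬ HasLoop Adj c) :
    ∃ v, Quot.mk Adj v = c ∧ α v = none := by
  by_contra! hdef
  have hclosed : ∀ v ∈ {v | Quot.mk Adj v = c}, ∃ w ∈ {v | Quot.mk Adj v = c}, α v = some w := by
    intro v hv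
    obtain ⟨w, hw⟩ := Option.ne_none_iff_exists'.mp (hdef v hv)
    exact ⟨w, (Quot.sound (hα v w hw)).symm.trans hv, hw⟩
  obtain ⟨v₀, hv₀⟩ := Quot.exists_rep c
  obtain ⟨u, hu, hper⟩ := exists_pperiodic_of_forall_mem hclosed hv₀
  exact hc ⟨u, hα u u (hfix u hper), hu⟩

lemma card_not_hasLoop_le_card_eq_none [Finite V] {α : V → Option V} (hα : IsAnimation Adj α)
    (hfix : PeriodicPointsFixed α) :
    Nat.card {c : Quot Adj // ¬ HasLoop Adj c} ≤ Nat.card {v // α v = none} := by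
  choose f hf hfnone using fun c : {c : Quot Adj // ¬ HasLoop Adj c} =>
    exists_eq_none_of_not_hasLoop hα hfix c.2
  refine Nat.card_le_card_of_injective (fun c => ⟨f c, hfnone c⟩) fun c₁ c₂ h => ?_
  exact Subtype.ext ((hf c₁).symm.trans ((congrArg (Quot.mk Adj ∘ Subtype.val) h).trans (hf c₂)))

noncomputable def descentAnimation (Adj : V → V → Prop) (μ : V → ℕ) (σ : V → V) :
    V → Option V := by
  classical
  exact fun v => if μ v = 0 then if Adj v v then some v else none else some (σ v)

variable {μ : V → ℕ} {σ : V → V}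

lemma descentAnimation_eq_some {v w : V} (h : descentAnimation Adj μ σ v = some w) :
    (μ v = 0 ∧ Adj v v ∧ w = v) ∨ (μ v ≠ 0 ∧ w = σ v) := by
  unfold descentAnimation at h
  split_ifs at h <;> simp_all

lemma descentAnimation_eq_none {v : V} :
    descentAnimation Adj μ σ v = none ↔ μ v = 0 ∧ ¬ Adj v v := by
  unfold descentAnimation
  split_ifs <;> simp_all

lemma isAnimation_descentAnimation (hσ : ∀ v, μ v ≠ 0 → Adj v (σ v) ∧ μ (σ v) < μ v) :
    IsAnimation Adj (descentAnimation Adj μ σ) := by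
  intro v w h
  rcases descentAnimation_eq_some h with ⟨-, hloop, rfl⟩ | ⟨h0, rfl⟩
  exacts [hloop, (hσ v h0).1]

lemma periodicPointsFixed_descentAnimation
    (hσ : ∀ v, μ v ≠ 0 → Adj v (σ v) ∧ μ (σ v) < μ v) :
    PeriodicPointsFixed (descentAnimation Adj μ σ) := by
  have hlt : ∀ v w, descentAnimation Adj μ σ v = some w → μ v ≠ 0 → μ w < μ v := by
    intro v w h h0
    rcases descentAnimation_eq_some h with ⟨h0', -⟩ | ⟨-, rfl⟩
    exacts [absurd h0' h0, (hσ v h0).2]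
  have hle : ∀ v w, descentAnimation Adj μ σ v = some w → μ w ≤ μ v := by
    intro v w h
    by_cases h0 : μ v = 0
    · rcases descentAnimation_eq_some h with ⟨-, -, rfl⟩ | ⟨h0', -⟩
      exacts [le_rfl, absurd h0 h0']
    · exact (hlt v w h h0).le
  intro u hu
  obtain ⟨w, hw⟩ := Option.isSome_iff_exists.mp hu.isSome
  rcases descentAnimation_eq_some hw with ⟨-, -, rfl⟩ | ⟨h0, -⟩
  exacts [hw, absurd (hu.eq_zero hle hlt) h0]

lemma exists_section_hasLoop (Adj : V → V → Prop) :
    ∃ R : Quot Adj → V, (∀ c, Quot.mk Adj (R c) = c) ∧ ∀ c, HasLoop Adj c → Adj (R c) (R c) := by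
  classical
  refine ⟨fun c => if h : HasLoop Adj c then h.choose else c.out, fun c => ?_, fun c hc => ?_⟩
  · dsimp only
    split_ifs with h
    exacts [h.choose_spec.2, c.out_eq]
  · simp only [dif_pos hc]
    exact hc.choose_spec.1

lemma exists_periodicPointsFixed_card_eq_none (hsym : ∀ a b, Adj a b → Adj b a) :
    ∃ α, IsAnimation Adj α ∧ PeriodicPointsFixed α ∧
      Nat.card {v // α v = none} = Nat.card {c : Quot Adj // ¬ HasLoop Adj c} := by
  have : Std.Symm Adj := ⟨hsym⟩
  obtain ⟨R, hR, hRloop⟩ := exists_section_hasLoop Adj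
  obtain ⟨μ, hμ0, hμ⟩ := exists_rank_of_reflTransGen (r := Adj)
    (S := {v | R (Quot.mk Adj v) = v}) fun a => ⟨R (Quot.mk Adj a), by simp [hR], by
      rw [← Relation.EqvGen.eqvGen_eq_reflTransGen]; exact Quot.eq.mp (hR _).symm⟩
  choose! σ hσ using hμ
  have hnone : ∀ v, descentAnimation Adj μ σ v = none ↔
      R (Quot.mk Adj v) = v ∧ ¬ HasLoop Adj (Quot.mk Adj v) := by
    intro v
    rw [descentAnimation_eq_none, hμ0, Set.mem_ofPred_eq]
    constructor
    · rintro ⟨hv, hloop⟩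
      exact ⟨hv, fun h => hloop (hv ▸ hRloop _ h)⟩
    · rintro ⟨hv, hc⟩
      exact ⟨hv, fun h => hc ⟨v, h, rfl⟩⟩
  refine ⟨descentAnimation Adj μ σ, isAnimation_descentAnimation hσ,
    periodicPointsFixed_descentAnimation hσ, Nat.card_congr
    { toFun := fun v => ⟨Quot.mk Adj v, ((hnone v).mp v.2).2⟩
      invFun := fun c => ⟨R c, (hnone _).mpr ⟨by rw [hR], by rw [hR]; exact c.2⟩⟩
      left_inv := fun v => Subtype.ext ((hnone v).mp v.2).1
      right_inv := fun c => Subtype.ext (hR c) }⟩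

end Animations

/-- **Maximal degree of animations whose periodic points are fixed points.**
Let `Γ` be a finite graph (loops allowed) with `n` vertices and adjacency relation `Adj`, and
let `d` be the number of connected components of `Γ` (classes of the quotient of the vertex set
by the equivalence generated by `Adj`) that do not contain a loop.  Let `Fix(Γ)` consist of the
animations `α` of `Γ` (partial functions with `α(v) ∼ v` whenever defined) all of whose periodic
points are fixed points.  Then `Fix(Γ)` contains an element of degree `n − d` but none of degree
`n − d + 1`. -/
theorem fixed_animations_max_degree {V : Type*} [Fintype V]
    (Adj : V → V → Prop) (hsym : ∀ a b, Adj a b → Adj b a)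
    (n d : ℕ) (hn : Nat.card V = n)
    (hd : Nat.card {c : Quot Adj // ¬ ∃ w : V, Adj w w ∧ Quot.mk Adj w = c} = d) :
    (∃ α : V → Option V, (∀ a b, α a = some b → Adj a b) ∧
        (∀ u, pperiodic α u → α u = some u) ∧
        Nat.card {v : V // (α v).isSome} = n - d) ∧
    ¬ (∃ α : V → Option V, (∀ a b, α a = some b → Adj a b) ∧
        (∀ u, pperiodic α u → α u = some u) ∧
        Nat.card {v : V // (α v).isSome} = n - d + 1) := by
  subst hn hd
  refine ⟨?_, ?_⟩
  · obtain ⟨α, hα, hfix, hnone⟩ := exists_periodicPointsFixed_card_eq_none hsym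
    have := card_isSome_add_card_eq_none α
    exact ⟨α, hα, hfix, by unfold HasLoop at hnone; omega⟩
  · rintro ⟨α, hα, hfix, hdeg⟩
    have := card_isSome_add_card_eq_none α
    have := card_not_hasLoop_le_card_eq_none hα hfix
    unfold HasLoop at this
    omega
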